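/- arXiv:2411.11741 — 3 statements merged into one kernel-verified Lean document; each statement's English description precedes it below -/
import Mathlib

section
/- Let n ∈ ℕ, p ∈ [0,1]^n, and let f : {0,1}^n → ℝ be monotone and 1-Lipschitz. Then for every λ ∈ (0,1], ∫ e^{λ f(x)} dμ_{e^{-λ}p}(x) ≤ exp(λ · ∫ f dμ_p). (That is, E[e^{λ Z^{(λ)}}] ≤ e^{λ E[Z^{(0)}]}, where Z^{(λ)} = f(X^{(λ)}) and X^{(λ)} ∼ μ_{e^{-λ}p}.) -/
open MeasureTheory

/-- The Bernoulli measure on `Bool` with parameter `q`. -/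
noncomputable def bernoulliMeasure (q : ℝ) : Measure Bool :=
  (ENNReal.ofReal q) • Measure.dirac true + (ENNReal.ofReal (1 - q)) • Measure.dirac false

/-- The product Bernoulli measure `μ_p` on `{0,1}^n`. -/
noncomputable def productBernoulli {n : ℕ} (p : Fin n → ℝ) : Measure (Fin n → Bool) :=
  Measure.pi fun i => bernoulliMeasure (p i)

/-- `f` is 1-Lipschitz with respect to the Hamming distance on `{0,1}^n`. -/
def OneLipschitz {n : ℕ} (f : (Fin n → Bool) → ℝ) : Prop :=
  ∀ x y : Fin n → Bool,
    |f x - f y| ≤ (Finset.univ.filter fun i => x i ≠ y i).card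

/-! Induction on `n`, conditioning on the first coordinate. If `g b` is the `μ_p`-mean of `f`
given first coordinate `b`, monotonicity and the Lipschitz bound give `0 ≤ g true - g false ≤ 1`,
and the induction hypothesis reduces the claim to the one-coordinate inequality
`e^{-λ} q e^{λ a} + 1 - e^{-λ} q ≤ e^{λ q a}` for `q ≥ 0`, `a ∈ [0,1]`. That follows from the
chord bound `e^{λ a} ≤ 1 + a (e^λ - 1)` (convexity of `exp`) together with `1 - e^{-λ} ≤ λ` and
`1 + λ q a ≤ e^{λ q a}`. -/

open Real Set

lemma isProbabilityMeasure_bernoulliMeasure {q : ℝ} (hq : q ∈ Icc (0 : ℝ) 1) :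
    IsProbabilityMeasure (bernoulliMeasure q) := by
  constructor
  simp [bernoulliMeasure, ← ENNReal.ofReal_add hq.1 (sub_nonneg.2 hq.2)]

lemma isProbabilityMeasure_productBernoulli {n : ℕ} {p : Fin n → ℝ}
    (hp : ∀ i, p i ∈ Icc (0 : ℝ) 1) : IsProbabilityMeasure (productBernoulli p) :=
  have := fun i => isProbabilityMeasure_bernoulliMeasure (hp i)
  Measure.pi.instIsProbabilityMeasure _

lemma integral_bernoulliMeasure {q : ℝ} (hq : q ∈ Icc (0 : ℝ) 1) (g : Bool → ℝ) :
    ∫ b, g b ∂bernoulliMeasure q = q * g true + (1 - q) * g false := by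
  have := isProbabilityMeasure_bernoulliMeasure hq
  rw [integral_fintype .of_finite, Fintype.sum_bool]
  simp [bernoulliMeasure, measureReal_def, hq.1, hq.2]

lemma integral_productBernoulli_succ {n : ℕ} {p : Fin (n + 1) → ℝ}
    (hp : ∀ i, p i ∈ Icc (0 : ℝ) 1) (g : (Fin (n + 1) → Bool) → ℝ) :
    ∫ x, g x ∂productBernoulli p =
      p 0 * ∫ y, g (Fin.cons true y) ∂productBernoulli (Fin.tail p)
        + (1 - p 0) * ∫ y, g (Fin.cons false y) ∂productBernoulli (Fin.tail p) := by
  have := fun i => isProbabilityMeasure_bernoulliMeasure (hp i)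
  have e := (measurePreserving_piFinSuccAbove (fun i => bernoulliMeasure (p i)) 0).symm
  rw [productBernoulli, ← e.integral_comp', integral_prod _ .of_finite,
    integral_bernoulliMeasure (hp 0)]
  simp [productBernoulli, Fin.tail, Fin.consEquiv]

lemma hammingDist_cons {n : ℕ} {β : Fin (n + 1) → Type*} [∀ i, DecidableEq (β i)]
    (a b : β 0) (x y : ∀ i : Fin n, β i.succ) :
    hammingDist (Fin.cons a x : ∀ i, β i) (Fin.cons b y) =
      (if a = b then 0 else 1) + hammingDist x y := by
  simp only [hammingDist, Finset.card_filter, Fin.sum_univ_succ, Fin.cons_zero, Fin.cons_succ]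
  split_ifs <;> simp_all

lemma oneLipschitz_iff {n : ℕ} {f : (Fin n → Bool) → ℝ} :
    OneLipschitz f ↔ ∀ x y, |f x - f y| ≤ hammingDist x y := Iff.rfl

section Cons

variable {n : ℕ} {f : (Fin (n + 1) → Bool) → ℝ}

lemma OneLipschitz.comp_cons (hf : OneLipschitz f) (b : Bool) :
    OneLipschitz fun y => f (Fin.cons b y) := by
  rw [oneLipschitz_iff] at hf ⊢
  intro x y
  simpa [hammingDist_cons] using hf (Fin.cons b x) (Fin.cons b y)

lemma OneLipschitz.apply_cons_true_le (hf : OneLipschitz f) (y : Fin n → Bool) :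
    f (Fin.cons true y) ≤ f (Fin.cons false y) + 1 := by
  have := oneLipschitz_iff.1 hf (Fin.cons true y) (Fin.cons false y)
  simp only [hammingDist_cons, hammingDist_self, Bool.true_eq_false, if_false, add_zero,
    Nat.cast_one] at this
  linarith [le_of_abs_le this]

lemma Monotone.comp_cons (hf : Monotone f) (b : Bool) :
    Monotone fun y => f (Fin.cons b y) :=
  fun _ _ h => hf (Fin.cons_le_cons.2 ⟨le_rfl, h⟩)

lemma Monotone.apply_cons_false_le (hf : Monotone f) (y : Fin n → Bool) :
    f (Fin.cons false y) ≤ f (Fin.cons true y) :=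
  hf (Fin.cons_le_cons.2 ⟨Bool.false_le _, le_rfl⟩)

end Cons

lemma exp_mul_le_one_add_mul_exp_sub_one {a : ℝ} (ha₀ : 0 ≤ a) (ha₁ : a ≤ 1) (l : ℝ) :
    exp (a * l) ≤ 1 + a * (exp l - 1) := by
  have := convexOn_exp.2 (mem_univ 0) (mem_univ l) (sub_nonneg.2 ha₁) ha₀ (by ring)
  simp only [smul_eq_mul, mul_zero, zero_add, exp_zero] at this
  linarith

lemma exp_neg_mul_mul_exp_add_le {q l u v : ℝ} (hq : 0 ≤ q) (huv : u ≤ v) (hvu : v ≤ u + 1) :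
    exp (-l) * q * exp (l * v) + (1 - exp (-l) * q) * exp (l * u)
      ≤ exp (l * (q * v + (1 - q) * u)) := by
  obtain ⟨a, ha₀, ha₁, rfl⟩ : ∃ a, 0 ≤ a ∧ a ≤ 1 ∧ v = u + a :=
    ⟨v - u, by linarith, by linarith, by ring⟩
  have hchord := exp_mul_le_one_add_mul_exp_sub_one ha₀ ha₁ l
  have hexp : exp (-l) * exp l = 1 := by rw [← exp_add, neg_add_cancel, exp_zero]
  calc exp (-l) * q * exp (l * (u + a)) + (1 - exp (-l) * q) * exp (l * u)
      = exp (l * u) * (1 + exp (-l) * q * (exp (a * l) - 1)) := by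
        rw [mul_add, exp_add, mul_comm l a]; ring
    _ ≤ exp (l * u) * (1 + q * a * (1 - exp (-l))) := by
        gcongr exp (l * u) * ?_
        have h := mul_le_mul_of_nonneg_left hchord (by positivity : 0 ≤ exp (-l) * q)
        linear_combination h + q * a * hexp
    _ ≤ exp (l * u) * (1 + q * a * l) := by
        gcongr
        linarith [add_one_le_exp (-l)]
    _ ≤ exp (l * u) * exp (q * a * l) := by
        gcongr
        linarith [add_one_le_exp (q * a * l)]
    _ = exp (l * (q * (u + a) + (1 - q) * u)) := by
        rw [← exp_add]; ring_nf

lemma exp_neg_mul_mem_Icc {l q : ℝ} (hl : 0 ≤ l) (hq : q ∈ Icc (0 : ℝ) 1) :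
    exp (-l) * q ∈ Icc (0 : ℝ) 1 :=
  ⟨mul_nonneg (exp_pos _).le hq.1, mul_le_one₀ (exp_le_one_iff.2 (neg_nonpos.2 hl)) hq.1 hq.2⟩

theorem integral_exp_productBernoulli_exp_neg_le {n : ℕ} (p : Fin n → ℝ)
    (hp : ∀ i, p i ∈ Icc (0 : ℝ) 1) (f : (Fin n → Bool) → ℝ) (hf_mono : Monotone f)
    (hf_lip : OneLipschitz f) {l : ℝ} (hl : 0 ≤ l) :
    ∫ x, exp (l * f x) ∂productBernoulli (fun i => exp (-l) * p i)
      ≤ exp (l * ∫ x, f x ∂productBernoulli p) := by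
  induction n with
  | zero =>
    have := isProbabilityMeasure_productBernoulli hp
    have := isProbabilityMeasure_productBernoulli fun i => exp_neg_mul_mem_Icc hl (hp i)
    simp [integral_unique]
  | succ n ih =>
    have hq (i) := exp_neg_mul_mem_Icc hl (hp i)
    have : IsProbabilityMeasure (productBernoulli (Fin.tail p)) :=
      isProbabilityMeasure_productBernoulli fun i => hp i.succ
    set g : Bool → ℝ := fun b => ∫ y, f (Fin.cons b y) ∂productBernoulli (Fin.tail p)
    have hg_mono : g false ≤ g true :=
      integral_mono .of_finite .of_finite hf_mono.apply_cons_false_le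
    have hg_lip : g true ≤ g false + 1 :=
      calc g true ≤ ∫ y, (f (Fin.cons false y) + 1) ∂productBernoulli (Fin.tail p) :=
            integral_mono .of_finite .of_finite hf_lip.apply_cons_true_le
        _ = g false + 1 := by simp [g, integral_add .of_finite .of_finite]
    have hih (b : Bool) :
        ∫ y, exp (l * f (Fin.cons b y)) ∂productBernoulli (Fin.tail fun i => exp (-l) * p i)
          ≤ exp (l * g b) :=
      ih (Fin.tail p) (fun i => hp i.succ) _ (hf_mono.comp_cons b) (hf_lip.comp_cons b)
    rw [integral_productBernoulli_succ hq, integral_productBernoulli_succ hp]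
    calc _ ≤ exp (-l) * p 0 * exp (l * g true) + (1 - exp (-l) * p 0) * exp (l * g false) :=
          add_le_add (mul_le_mul_of_nonneg_left (hih true) (hq 0).1)
            (mul_le_mul_of_nonneg_left (hih false) (sub_nonneg.2 (hq 0).2))
      _ ≤ _ := exp_neg_mul_mul_exp_add_le (hp 0).1 hg_mono hg_lip

/-- For a monotone 1-Lipschitz `f` and any `λ ∈ (0,1]`,
`E[e^{λ Z^{(λ)}}] ≤ e^{λ E[Z^{(0)}]}` where `Z^{(λ)} = f(X^{(λ)})` and
`X^{(λ)} ∼ μ_{e^{-λ}p}`. -/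
theorem mgf_of_scaled_bounded {n : ℕ} (p : Fin n → ℝ)
    (hp : ∀ i, p i ∈ Set.Icc (0 : ℝ) 1)
    (f : (Fin n → Bool) → ℝ) (hf_mono : Monotone f) (hf_lip : OneLipschitz f)
    (l : ℝ) (hl : l ∈ Set.Ioc (0 : ℝ) 1) :
    (∫ x, Real.exp (l * f x) ∂(productBernoulli (fun i => Real.exp (-l) * p i)))
      ≤ Real.exp (l * ∫ x, f x ∂(productBernoulli p)) :=
  integral_exp_productBernoulli_exp_neg_le p hp f hf_mono hf_lip hl.1.le
end

section
/- Let n ∈ ℕ, p ∈ [0,1]^n, and let f : {0,1}^n → ℝ be any function. Define F(λ) = ∫ e^{λ f(x)} dμ_{e^{-λ}p}(x). Then F is differentiable at every λ ≥ 0, with derivative F'(λ) = ∫ f(x) e^{λ f(x)} dμ_{e^{-λ}p}(x) − Σ_{i=1}^{n} ∫ ( e^{λ f(x)} − e^{λ f(x_{i←0})} ) dμ_{e^{-λ}p}(x). -/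
/-!
Write `F` as the finite sum `∑ₓ wₛ(x) e^{s f(x)}`, where `wₛ(x) = ∏ᵢ (xᵢ ? qᵢ : 1 - qᵢ)` with
`qᵢ = e^{-s} pᵢ`. Since `qᵢ' = -qᵢ`, differentiating the `i`-th factor of `wₛ(x)` gives
`∓ qᵢ ∏_{j ≠ i} (xⱼ ? qⱼ : 1 - qⱼ)`. Pairing each `x` with its neighbour across coordinate `i`,
this derivative term is exactly `-E[e^{s f(x)} - e^{s f(x_{i←0})}]`: both sides equal
`-qᵢ ∑_y ∏_{j ≠ i} … (e^{s f(y, 1)} - e^{s f(y, 0)})`.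
-/

open MeasureTheory

open Finset Function Real

section BooleanCube

variable {ι : Type*} [Fintype ι]

def bernoulliWeight (q : ℝ) (b : Bool) : ℝ := if b then q else 1 - q

def productBernoulliWeight (q : ι → ℝ) (x : ι → Bool) : ℝ := ∏ i, bernoulliWeight (q i) (x i)

lemma hasDerivAt_bernoulliWeight {c : ℝ → ℝ} {c' s : ℝ} (hc : HasDerivAt c c' s) (b : Bool) :
    HasDerivAt (fun t => bernoulliWeight (c t) b) (if b then c' else -c') s := by
  cases b
  · simpa [bernoulliWeight] using hc.const_sub 1
  · simpa [bernoulliWeight] using hc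

variable [DecidableEq ι]

lemma sum_eq_sum_funSplitAt (i : ι) (A : (ι → Bool) → ℝ) :
    ∑ x, A x = ∑ y : {j // j ≠ i} → Bool,
      (A ((Equiv.funSplitAt i Bool).symm (true, y)) +
        A ((Equiv.funSplitAt i Bool).symm (false, y))) := by
  rw [← (Equiv.funSplitAt i Bool).symm.sum_comp, Fintype.sum_prod_type_right]
  simp only [Fintype.sum_bool]

lemma sum_prod_erase_bernoulliWeight_mul_ite (q : ι → ℝ) (i : ι) (g : (ι → Bool) → ℝ) :
    ∑ x, (∏ j ∈ univ.erase i, bernoulliWeight (q j) (x j)) * ((if x i then q i else -q i) * g x)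
      = ∑ x, productBernoulliWeight q x * (g x - g (update x i false)) := by
  rw [sum_eq_sum_funSplitAt i, sum_eq_sum_funSplitAt i]
  refine sum_congr rfl fun y _ => ?_
  set split : Bool → ι → Bool := fun b => (Equiv.funSplitAt i Bool).symm (b, y)
  simp only [show ∀ b, (Equiv.funSplitAt i Bool).symm (b, y) = split b from fun _ => rfl]
  have split_self (b : Bool) : split b i = b := by simp [split]
  have split_ne (b : Bool) {j : ι} (hj : j ≠ i) : split b j = y ⟨j, hj⟩ := by simp [split, hj]
  have update_split (b : Bool) : update (split b) i false = split false := by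
    ext j
    by_cases hj : j = i
    · subst hj; simp [split_self]
    · simp [hj, split_ne _ hj]
  set P := ∏ j ∈ univ.erase i, bernoulliWeight (q j) (split false j)
  have prod_erase_split (b : Bool) :
      ∏ j ∈ univ.erase i, bernoulliWeight (q j) (split b j) = P :=
    prod_congr rfl fun j hj => by rw [split_ne b (ne_of_mem_erase hj), split_ne false]
  have weight_split (b : Bool) :
      productBernoulliWeight q (split b) = bernoulliWeight (q i) b * P := by
    rw [productBernoulliWeight, ← mul_prod_erase univ _ (mem_univ i), split_self,
      prod_erase_split]
  simp only [split_self, update_split, prod_erase_split, weight_split]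
  simp only [bernoulliWeight, if_true, Bool.false_eq_true, if_false]
  ring

lemma hasDerivAt_productBernoulliWeight_exp_neg (p : ι → ℝ) (x : ι → Bool) (l : ℝ) :
    HasDerivAt (fun s => productBernoulliWeight (fun i => exp (-s) * p i) x)
      (-∑ i, (∏ j ∈ univ.erase i, bernoulliWeight (exp (-l) * p j) (x j)) *
          (if x i then exp (-l) * p i else -(exp (-l) * p i))) l := by
  have hq (i : ι) : HasDerivAt (fun s => exp (-s) * p i) (-(exp (-l) * p i)) l := by
    simpa using ((hasDerivAt_neg l).exp.mul_const (p i))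
  have := HasDerivAt.fun_finsetProd (u := univ) fun i _ => hasDerivAt_bernoulliWeight (hq i) (x i)
  refine this.congr_deriv ?_
  rw [← sum_neg_distrib]
  refine sum_congr rfl fun i _ => ?_
  cases x i <;> simp

theorem hasDerivAt_sum_productBernoulliWeight_exp_neg_mul {h : ℝ → (ι → Bool) → ℝ}
    {h' : (ι → Bool) → ℝ} {l : ℝ} (hh : ∀ x, HasDerivAt (fun s => h s x) (h' x) l)
    (p : ι → ℝ) :
    HasDerivAt (fun s => ∑ x, productBernoulliWeight (fun i => exp (-s) * p i) x * h s x)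
      (∑ x, productBernoulliWeight (fun i => exp (-l) * p i) x * h' x -
        ∑ i, ∑ x, productBernoulliWeight (fun i => exp (-l) * p i) x *
          (h l x - h l (update x i false))) l := by
  refine (HasDerivAt.fun_sum fun x _ =>
    (hasDerivAt_productBernoulliWeight_exp_neg p x l).mul (hh x)).congr_deriv ?_
  simp only [← sum_prod_erase_bernoulliWeight_mul_ite, neg_mul, sum_neg_distrib, sum_mul,
    mul_assoc, sum_add_distrib]
  rw [sum_comm]
  ring

end BooleanCube

instance (q : ℝ) : IsFiniteMeasure (bernoulliMeasure q) :=
  ⟨by simp [bernoulliMeasure, ENNReal.add_lt_top]⟩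

instance {n : ℕ} (q : Fin n → ℝ) : IsFiniteMeasure (productBernoulli q) := by
  unfold productBernoulli
  infer_instance

lemma bernoulliMeasure_real_singleton {q : ℝ} (hq : q ∈ Set.Icc 0 1) (b : Bool) :
    (bernoulliMeasure q).real {b} = bernoulliWeight q b := by
  cases b <;> simp [bernoulliMeasure, bernoulliWeight, measureReal_def, hq.1, hq.2]

lemma integral_productBernoulli {n : ℕ} {q : Fin n → ℝ} (hq : ∀ i, q i ∈ Set.Icc 0 1)
    (g : (Fin n → Bool) → ℝ) :
    ∫ x, g x ∂productBernoulli q = ∑ x, productBernoulliWeight q x * g x := by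
  rw [integral_fintype (.of_finite)]
  refine sum_congr rfl fun x _ => ?_
  rw [smul_eq_mul, productBernoulli, measureReal_def, Measure.pi_singleton, ENNReal.toReal_prod]
  simp only [← measureReal_def, bernoulliMeasure_real_singleton (hq _), productBernoulliWeight]

/-- Derivative of `F(λ) = ∫ e^{λ f} dμ_{e^{-λ}p}`: for every `λ ≥ 0`,
`F'(λ) = E[Z^{(λ)} e^{λ Z^{(λ)}}] − Σᵢ E[e^{λ Z^{(λ)}} − e^{λ Zᵢ^{(λ)}}]`
where `Zᵢ^{(λ)}` is obtained by setting the `i`-th coordinate to `0`. -/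
theorem deriv_of_exp_scaled_expectation {n : ℕ} (p : Fin n → ℝ)
    (hp : ∀ i, p i ∈ Set.Icc (0 : ℝ) 1)
    (f : (Fin n → Bool) → ℝ)
    (F : ℝ → ℝ)
    (hF : F = fun l =>
      ∫ x, Real.exp (l * f x) ∂(productBernoulli (fun i => Real.exp (-l) * p i))) :
    ∀ l : ℝ, 0 ≤ l →
      HasDerivWithinAt F
        ((∫ x, f x * Real.exp (l * f x)
            ∂(productBernoulli (fun i => Real.exp (-l) * p i))) -
          ∑ i : Fin n,
            ∫ x, (Real.exp (l * f x) - Real.exp (l * f (Function.update x i false)))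
              ∂(productBernoulli (fun i => Real.exp (-l) * p i)))
        (Set.Ici 0) l := by
  intro l hl
  have hq (s : ℝ) (hs : 0 ≤ s) (i : Fin n) : exp (-s) * p i ∈ Set.Icc 0 1 :=
    ⟨mul_nonneg (exp_pos _).le (hp i).1,
      mul_le_one₀ (exp_le_one_iff.2 (neg_nonpos.2 hs)) (hp i).1 (hp i).2⟩
  have hF_sum : Set.EqOn F
      (fun s => ∑ x, productBernoulliWeight (fun i => exp (-s) * p i) x * exp (s * f x))
      (Set.Ici 0) := fun s hs => by
    rw [hF]
    exact integral_productBernoulli (hq s hs) _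
  have hexp (x : Fin n → Bool) :
      HasDerivAt (fun s => exp (s * f x)) (f x * exp (l * f x)) l := by
    simpa [mul_comm] using ((hasDerivAt_id l).mul_const (f x)).exp
  simp only [integral_productBernoulli (hq l hl)]
  exact (hasDerivAt_sum_productBernoulliWeight_exp_neg_mul hexp p).hasDerivWithinAt.congr
    hF_sum (hF_sum hl)
end

section
/- Let M be a matroid on a finite ground set E, let k ≥ 1 be an integer, and let N be the extended k-fold union of M, with closure (span) operator closure_N. If S₀ ⊆ E and B ⊆ S₀ is a basis of S₀ in M (i.e., B is M-independent and every element of S₀ lies in the M-closure of B), then S₀ × [k] ⊆ closure_N(B × [k]). -/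
/-- The rank of a set `S` in a matroid `M`: the maximum cardinality of an
independent subset of `S`. -/
noncomputable def matroidRank {α : Type*} (M : Matroid α) (S : Set α) : ℕ :=
  sSup {r | ∃ I : Set α, I ⊆ S ∧ M.Indep I ∧ I.ncard = r}

/-- The span (closure) of a set `S` in a matroid `M`: the elements whose addition
does not increase the rank. -/
noncomputable def matroidSpan {α : Type*} (M : Matroid α) (S : Set α) : Set α :=
  {a | matroidRank M (S ∪ {a}) = matroidRank M S}

/-- The independence predicate of the extended `k`-fold union of `M`: a set
`S ⊆ E × [k]` is independent iff it is a union `S₁ ∪ ⋯ ∪ S_k` where each `S_j`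
has pairwise distinct first coordinates and the set of first coordinates of `S_j`
is independent in `M`. -/
def ExtendedIndep {α : Type*} (M : Matroid α) (k : ℕ) (S : Set (α × Fin k)) : Prop :=
  ∃ Ss : Fin k → Set (α × Fin k),
    S = ⋃ j, Ss j ∧
    ∀ j, Set.InjOn Prod.fst (Ss j) ∧ M.Indep (Prod.fst '' Ss j)

/-- The occupancy function `occ_e(S) = k − rank_N(S ∪ ({e} × [k])) + rank_N(S)`,
valued in `ℤ`. -/
noncomputable def occ {α : Type*} {k : ℕ} (N : Matroid (α × Fin k)) (e : α)
    (S : Set (α × Fin k)) : ℤ :=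
  (k : ℤ) - matroidRank N (S ∪ ({e} ×ˢ (Set.univ : Set (Fin k)))) + matroidRank N S

/-!
Every `N`-independent subset of `(B × [k]) ∪ {(e, j)}` splits into `k` pieces, each mapped
injectively by the first projection onto an `M`-independent subset of `B ∪ {e}`. Since `e` is
spanned by `B`, each piece has at most `|B|` elements, so the union has at most `k |B|`. This bound
is attained by the `N`-independent set `B × [k]` itself, so adding `(e, j)` does not raise the rank.
-/

section MatroidRank

variable {α : Type*} (M : Matroid α)

lemma matroidRank_le_of_forall_indep {S : Set α} {n : ℕ}
    (h : ∀ I ⊆ S, M.Indep I → I.ncard ≤ n) : matroidRank M S ≤ n := by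
  refine csSup_le ⟨0, ∅, Set.empty_subset _, M.empty_indep, Set.ncard_empty _⟩ ?_
  rintro r ⟨I, hIS, hI, rfl⟩
  exact h I hIS hI

lemma ncard_le_matroidRank {S I : Set α} (hS : S.Finite) (hIS : I ⊆ S) (hI : M.Indep I) :
    I.ncard ≤ matroidRank M S :=
  le_csSup ⟨S.ncard, by rintro r ⟨J, hJS, -, rfl⟩; exact Set.ncard_le_ncard hJS hS⟩
    ⟨I, hIS, hI, rfl⟩

lemma matroidRank_eq_ncard_of_forall_indep {S I : Set α} (hS : S.Finite) (hIS : I ⊆ S)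
    (hI : M.Indep I) (h : ∀ J ⊆ S, M.Indep J → J.ncard ≤ I.ncard) :
    matroidRank M S = I.ncard :=
  (matroidRank_le_of_forall_indep M h).antisymm (ncard_le_matroidRank M hS hIS hI)

lemma mem_matroidSpan_of_forall_indep {S I : Set α} {a : α} (hS : S.Finite) (hIS : I ⊆ S)
    (hI : M.Indep I) (h : ∀ J ⊆ S ∪ {a}, M.Indep J → J.ncard ≤ I.ncard) :
    a ∈ matroidSpan M S := by
  show matroidRank M (S ∪ {a}) = matroidRank M S
  rw [matroidRank_eq_ncard_of_forall_indep M (hS.union (Set.finite_singleton a))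
      (hIS.trans Set.subset_union_left) hI h,
    matroidRank_eq_ncard_of_forall_indep M hS hIS hI
      fun J hJ => h J (hJ.trans Set.subset_union_left)]

variable {M}

lemma Matroid.Indep.matroidRank_eq_ncard {B : Set α} (hB : M.Indep B) (hfin : B.Finite) :
    matroidRank M B = B.ncard :=
  matroidRank_eq_ncard_of_forall_indep M hfin subset_rfl hB
    fun _ hJ _ => Set.ncard_le_ncard hJ hfin

lemma Matroid.Indep.ncard_le_of_mem_matroidSpan {B I : Set α} {e : α} (hB : M.Indep B)
    (hfin : B.Finite) (he : e ∈ matroidSpan M B) (hIB : I ⊆ B ∪ {e}) (hI : M.Indep I) :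
    I.ncard ≤ B.ncard := by
  have hrank : matroidRank M (B ∪ {e}) = matroidRank M B := he
  calc I.ncard ≤ matroidRank M (B ∪ {e}) :=
        ncard_le_matroidRank M (hfin.union (Set.finite_singleton e)) hIB hI
    _ = B.ncard := by rw [hrank, hB.matroidRank_eq_ncard hfin]

end MatroidRank

section ExtendedIndep

variable {α : Type*} {M : Matroid α} {k : ℕ}

lemma Matroid.Indep.extendedIndep_prod_univ {B : Set α} (hB : M.Indep B) :
    ExtendedIndep M k (B ×ˢ Set.univ) := by
  refine ⟨fun j => B ×ˢ {j}, by ext; simp, fun j => ⟨?_, ?_⟩⟩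
  · rintro ⟨a, i⟩ ⟨-, hi : i = j⟩ ⟨b, i'⟩ ⟨-, hi' : i' = j⟩ (rfl : a = b)
    rw [hi, hi']
  · rwa [Set.fst_image_prod _ (Set.singleton_nonempty j)]

lemma ExtendedIndep.ncard_le_mul {S : Set (α × Fin k)} (hS : ExtendedIndep M k S) {A : Set α}
    (hSA : Prod.fst '' S ⊆ A) {n : ℕ} (hA : ∀ I ⊆ A, M.Indep I → I.ncard ≤ n) :
    S.ncard ≤ k * n := by
  obtain ⟨Ss, rfl, hSs⟩ := hS
  have hpiece : ∀ j, (Ss j).ncard ≤ n := fun j => by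
    rw [← (hSs j).1.ncard_image]
    exact hA _ ((Set.image_mono (Set.subset_iUnion Ss j)).trans hSA) (hSs j).2
  calc (⋃ j, Ss j).ncard ≤ ∑ j, (Ss j).ncard := Set.ncard_iUnion_le_of_fintype Ss
    _ ≤ ∑ _j : Fin k, n := Finset.sum_le_sum fun j _ => hpiece j
    _ = k * n := by simp

end ExtendedIndep

theorem prod_subset_span_basis_prod_general {α : Type*} (M : Matroid α) (hfin : M.E.Finite)
    (k : ℕ)
    (N : Matroid (α × Fin k))
    (hN : ∀ S : Set (α × Fin k), N.Indep S ↔ ExtendedIndep M k S)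
    (S₀ : Set α) (B : Set α)
    (hBindep : M.Indep B) (hBspan : S₀ ⊆ matroidSpan M B) :
    S₀ ×ˢ (Set.univ : Set (Fin k)) ⊆ matroidSpan N (B ×ˢ (Set.univ : Set (Fin k))) := by
  rintro ⟨e, j⟩ ⟨he, -⟩
  have hBfin : B.Finite := hfin.subset hBindep.subset_ground
  have hfst : Prod.fst '' (B ×ˢ Set.univ ∪ {(e, j)}) ⊆ B ∪ {e} := by
    rintro _ ⟨⟨a, i⟩, ⟨ha, -⟩ | h, rfl⟩
    · exact Or.inl ha
    · exact Or.inr (congrArg Prod.fst h)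
  have hBk : N.Indep (B ×ˢ Set.univ) := (hN _).mpr hBindep.extendedIndep_prod_univ
  refine mem_matroidSpan_of_forall_indep N (hBfin.prod Set.finite_univ) subset_rfl hBk
    fun I hI hIndep => ?_
  rw [Set.ncard_prod, Set.ncard_univ, Nat.card_fin, mul_comm]
  exact ((hN I).mp hIndep).ncard_le_mul ((Set.image_mono hI).trans hfst)
    fun J hJ hJindep => hBindep.ncard_le_of_mem_matroidSpan hBfin (hBspan he) hJ hJindep

/-- If `B` is a basis of `S₀` in `M`, then `S₀ × [k]` is spanned by `B × [k]` in the
extended `k`-fold union of `M`. -/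
theorem prod_subset_span_basis_prod {α : Type*} (M : Matroid α) (hfin : M.E.Finite)
    (k : ℕ) (hk : 1 ≤ k)
    (N : Matroid (α × Fin k)) (hNE : N.E = M.E ×ˢ (Set.univ : Set (Fin k)))
    (hN : ∀ S : Set (α × Fin k), N.Indep S ↔ ExtendedIndep M k S)
    (S₀ : Set α) (hS₀ : S₀ ⊆ M.E) (B : Set α) (hBS : B ⊆ S₀)
    (hBindep : M.Indep B) (hBspan : S₀ ⊆ matroidSpan M B) :
    S₀ ×ˢ (Set.univ : Set (Fin k)) ⊆ matroidSpan N (B ×ˢ (Set.univ : Set (Fin k))) :=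
  prod_subset_span_basis_prod_general M hfin k N hN S₀ B hBindep hBspan
end
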